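/- arXiv:quant-ph/0202098 — 2 statements merged into one kernel-verified Lean document; each statement's English description precedes it below -/
import Mathlib

section
/- The function s : (0, √(V² - 2κV)) → (0, √(V² - 2κV)) defined by s(k) = √(V² - 2V ω̄(k) + k²) is a strictly decreasing bijection, is its own inverse (s ∘ s = id), and has the unique fixed point k₀ = (V/2)√(1 - (2κ/V)²). -/
noncomputable def ob (κ k : ℝ) : ℝ := Real.sqrt (κ^2 + k^2)

/-- The wave number map q = s(k) of Klein's step. -/
noncomputable def sMap (κ V k : ℝ) : ℝ := Real.sqrt (V^2 - 2*V*ob κ k + k^2)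

theorem stmt5 (κ V : ℝ) (hκ : 0 < κ) (hV : 2*κ < V) :
    StrictAntiOn (sMap κ V) (Set.Ioo 0 (Real.sqrt (V^2 - 2*κ*V))) ∧
    Set.BijOn (sMap κ V) (Set.Ioo 0 (Real.sqrt (V^2 - 2*κ*V)))
      (Set.Ioo 0 (Real.sqrt (V^2 - 2*κ*V))) ∧
    (∀ k ∈ Set.Ioo (0:ℝ) (Real.sqrt (V^2 - 2*κ*V)), sMap κ V (sMap κ V k) = k) ∧
    sMap κ V (V/2 * Real.sqrt (1 - (2*κ/V)^2)) = V/2 * Real.sqrt (1 - (2*κ/V)^2) ∧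
    (∀ k ∈ Set.Ioo (0:ℝ) (Real.sqrt (V^2 - 2*κ*V)), sMap κ V k = k →
      k = V/2 * Real.sqrt (1 - (2*κ/V)^2)) := by
  have hV0 : 0 < V := by linarith
  set L := Real.sqrt (V^2 - 2*κ*V) with hLdef
  have hL2 : L^2 = V^2 - 2*κ*V := Real.sq_sqrt (by nlinarith)
  have hL0 : 0 < L := Real.sqrt_pos.2 (by nlinarith)
  have hob_sq : ∀ k : ℝ, (ob κ k)^2 = κ^2 + k^2 := fun k => Real.sq_sqrt (by positivity)
  have hob_pos : ∀ k : ℝ, 0 < ob κ k := fun k => Real.sqrt_pos.2 (by positivity)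
  -- ω̄(k) < V - κ on the interval
  have hob_lt : ∀ k ∈ Set.Ioo (0:ℝ) L, ob κ k < V - κ := by
    intro k hk
    have hk2 : k^2 < L^2 := by nlinarith [hk.1, hk.2]
    have : κ^2 + k^2 < (V - κ)^2 := by nlinarith
    calc ob κ k < Real.sqrt ((V-κ)^2) := Real.sqrt_lt_sqrt (by positivity) this
    _ = V - κ := Real.sqrt_sq (by linarith)
  have hob_gt : ∀ k ∈ Set.Ioo (0:ℝ) L, κ < ob κ k := by
    intro k hk
    have : Real.sqrt (κ^2) < ob κ k := Real.sqrt_lt_sqrt (by positivity) (by nlinarith [hk.1])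
    rwa [Real.sqrt_sq hκ.le] at this
  -- positivity of the radicand
  have hX_pos : ∀ k ∈ Set.Ioo (0:ℝ) L, 0 < V^2 - 2*V*ob κ k + k^2 := by
    intro k hk
    have h1 := hob_lt k hk
    have h2 := hob_gt k hk
    have h3 := hob_sq k
    nlinarith
  have hsMap_sq : ∀ k ∈ Set.Ioo (0:ℝ) L, (sMap κ V k)^2 = V^2 - 2*V*ob κ k + k^2 := by
    intro k hk
    exact Real.sq_sqrt (hX_pos k hk).le
  -- s maps the interval to itself
  have hmaps : ∀ k ∈ Set.Ioo (0:ℝ) L, sMap κ V k ∈ Set.Ioo (0:ℝ) L := by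
    intro k hk
    constructor
    · exact Real.sqrt_pos.2 (hX_pos k hk)
    · have h1 := hob_gt k hk
      have h3 := hob_sq k
      have h4 := hob_lt k hk
      have : V^2 - 2*V*ob κ k + k^2 < L^2 := by
        nlinarith [mul_pos (sub_pos.2 h1) (show (0:ℝ) < 2*V - ob κ k - κ by linarith)]
      calc sMap κ V k < Real.sqrt (L^2) := Real.sqrt_lt_sqrt (hX_pos k hk).le this
      _ = L := Real.sqrt_sq hL0.le
  -- ω̄(s k) = V - ω̄ k
  have hob_s : ∀ k ∈ Set.Ioo (0:ℝ) L, ob κ (sMap κ V k) = V - ob κ k := by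
    intro k hk
    have h1 := hob_lt k hk
    have h2 := hsMap_sq k hk
    have : κ^2 + (sMap κ V k)^2 = (V - ob κ k)^2 := by
      rw [h2]; nlinarith [hob_sq k]
    rw [ob, this]
    exact Real.sqrt_sq (by linarith)
  -- involution
  have hinv : ∀ k ∈ Set.Ioo (0:ℝ) L, sMap κ V (sMap κ V k) = k := by
    intro k hk
    have h1 := hob_s k hk
    have h2 := hsMap_sq k hk
    rw [sMap, h1]
    have : V^2 - 2*V*(V - ob κ k) + (sMap κ V k)^2 = k^2 := by rw [h2]; ring
    rw [this, Real.sqrt_sq hk.1.le]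
  -- strict antitone
  have hanti : StrictAntiOn (sMap κ V) (Set.Ioo (0:ℝ) L) := by
    intro a ha b hb hab
    have hoa := hob_sq a
    have hob := hob_sq b
    have hoblt : ob κ a < ob κ b := by
      apply Real.sqrt_lt_sqrt (by positivity)
      nlinarith [ha.1, hb.1]
    have hla := hob_lt a ha
    have hlb := hob_lt b hb
    have hkey : V^2 - 2*V*ob κ b + b^2 < V^2 - 2*V*ob κ a + a^2 := by
      nlinarith [hob_pos a, hob_pos b]
    exact Real.sqrt_lt_sqrt (hX_pos b hb).le hkey
  refine ⟨hanti, ⟨fun k hk => hmaps k hk, hanti.injOn, fun y hy => ⟨sMap κ V y, hmaps y hy, hinv y hy⟩⟩, hinv, ?_, ?_⟩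
  · -- fixed point value
    set c := V/2 * Real.sqrt (1 - (2*κ/V)^2) with hc
    have hfrac : (2*κ/V)^2 ≤ 1 := by
      rw [div_pow, div_le_one (by positivity)]
      nlinarith
    have hc0 : 0 ≤ c := by positivity
    have hc2 : c^2 = V^2/4 - κ^2 := by
      rw [hc, mul_pow, Real.sq_sqrt (by linarith)]
      field_simp
      ring
    have hobc : ob κ c = V/2 := by
      rw [ob]
      have : κ^2 + c^2 = (V/2)^2 := by rw [hc2]; ring
      rw [this, Real.sqrt_sq (by linarith)]
    rw [sMap, hobc]
    have : V^2 - 2*V*(V/2) + c^2 = c^2 := by ring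
    rw [this, Real.sqrt_sq hc0]
  · -- uniqueness
    intro k hk hfix
    set c := V/2 * Real.sqrt (1 - (2*κ/V)^2) with hc
    have hfrac : (2*κ/V)^2 ≤ 1 := by
      rw [div_pow, div_le_one (by positivity)]
      nlinarith
    have hc0 : 0 ≤ c := by positivity
    have hc2 : c^2 = V^2/4 - κ^2 := by
      rw [hc, mul_pow, Real.sq_sqrt (by linarith)]
      field_simp
      ring
    have hsq := hsMap_sq k hk
    rw [hfix] at hsq
    have hob2 : ob κ k = V/2 := by
      have h1 : 2*V*(ob κ k) - V^2 = 0 := by linarith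
      have h2 : V * (2*(ob κ k) - V) = 0 := by linear_combination h1
      rcases mul_eq_zero.1 h2 with h' | h'
      · linarith
      · linarith
    have hk2 : k^2 = c^2 := by
      have h5 := hob_sq k
      rw [hob2] at h5
      linarith
    have h6 : (k - c) * (k + c) = 0 := by linear_combination hk2
    rcases mul_eq_zero.1 h6 with h | h
    · linarith
    · linarith [hk.1]
end

section
/- Let a, b, c, k₀ be real constants with b > 0, a > 0, c ≥ 0, and define the vector field j(x⁰,x¹) = (a + c·Θ(-x¹)(1 - cos(k₀x¹)), b) on ℝ². Then for each τ ∈ ℝ the maximal integral curve γ of j with γ(0) = (τ, 0) is defined on all of ℝ and is given by γ(λ) = (τ, 0) + λ(a, b) + Θ(-λ)(c(λ - sin(k₀bλ)/(k₀b)), 0). Its orbit is exactly the set of points (x⁰, x¹) satisfying x⁰ - τ = (a/b)x¹ + (c/(k₀b))Θ(-x¹)(k₀x¹ - sin(k₀x¹)). -/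
open Real

/-- Heaviside step: Θ(x) = 1 for x ≥ 0 and 0 for x < 0. -/
noncomputable def Heav (x : ℝ) : ℝ := if 0 ≤ x then 1 else 0

/-- The current vector field j(x⁰,x¹) = (a + cΘ(-x¹)(1 - cos(k₀x¹)), b). -/
noncomputable def jF (a b c k0 : ℝ) (p : ℝ × ℝ) : ℝ × ℝ :=
  (a + c * Heav (-p.2) * (1 - Real.cos (k0 * p.2)), b)

/-- The explicit integral curve through (τ,0). -/
noncomputable def curve (a b c k0 τ : ℝ) (lam : ℝ) : ℝ × ℝ :=
  (τ + lam * a + Heav (-lam) * c * (lam - Real.sin (k0 * b * lam) / (k0 * b)), lam * b)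

lemma heav_neg_mul (b x : ℝ) (hb : 0 < b) : Heav (-(x*b)) = Heav (-x) := by
  unfold Heav
  congr 1
  simp only [neg_nonneg, eq_iff_iff]
  constructor
  · intro h; nlinarith
  · intro h; nlinarith

lemma g_hasDeriv (K : ℝ) (hK : K ≠ 0) (l : ℝ) :
    HasDerivAt (fun l => l - Real.sin (K*l)/K) (1 - Real.cos (K*l)) l := by
  have h1 : HasDerivAt (fun l : ℝ => K * l) K l := by
    simpa using (hasDerivAt_id l).const_mul K
  have h2 : HasDerivAt (fun l : ℝ => Real.sin (K*l)) (Real.cos (K*l) * K) l :=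
    (Real.hasDerivAt_sin (K*l)).comp l h1
  have h3 := (h2.div_const K)
  have h4 : Real.cos (K*l) * K / K = Real.cos (K*l) := by field_simp
  rw [h4] at h3
  exact (hasDerivAt_id l).sub h3

lemma heav_term_hasDeriv (K : ℝ) (hK : 0 < K) (lam : ℝ) :
    HasDerivAt (fun l => Heav (-l) * (l - Real.sin (K*l)/K))
      (Heav (-lam) * (1 - Real.cos (K*lam))) lam := by
  have hK' : K ≠ 0 := ne_of_gt hK
  rcases lt_trichotomy lam 0 with h | h | h
  · have hev : (fun l => Heav (-l) * (l - Real.sin (K*l)/K)) =ᶠ[nhds lam]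
        (fun l => l - Real.sin (K*l)/K) := by
      filter_upwards [eventually_lt_nhds h] with l hl
      simp [Heav, neg_nonneg, hl.le]
    have : HasDerivAt (fun l => Heav (-l) * (l - Real.sin (K*l)/K)) (1 - Real.cos (K*lam)) lam :=
      (g_hasDeriv K hK' lam).congr_of_eventuallyEq hev
    have hH : Heav (-lam) = 1 := by simp [Heav, neg_nonneg, h.le]
    rw [hH, one_mul]
    exact this
  · subst h
    rw [hasDerivAt_iff_isLittleO]
    have hg := (g_hasDeriv K hK' 0)
    have hg0 : (1 : ℝ) - Real.cos (K*0) = 0 := by simp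
    rw [hg0, hasDerivAt_iff_isLittleO] at hg
    simp only [sub_zero, smul_zero, mul_zero, Real.sin_zero, zero_div, zero_sub, neg_zero,
      Real.cos_zero, sub_self, smul_eq_mul, neg_zero] at hg ⊢
    refine Asymptotics.IsBigO.trans_isLittleO ?_ hg
    apply Asymptotics.isBigO_of_le
    intro x
    simp only [Real.norm_eq_abs]
    rw [abs_mul]
    have h1 : |Heav (-x)| ≤ 1 := by unfold Heav; split <;> simp
    nlinarith [abs_nonneg (x - Real.sin (K*x)/K), abs_nonneg (Heav (-x))]
  · have hev : (fun l => Heav (-l) * (l - Real.sin (K*l)/K)) =ᶠ[nhds lam]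
        (fun _ => (0:ℝ)) := by
      filter_upwards [eventually_gt_nhds h] with l hl
      simp [Heav, neg_nonneg, not_le.mpr hl]
    have hH : Heav (-lam) = 0 := by simp [Heav, neg_nonneg, not_le.mpr h]
    rw [hH, zero_mul]
    exact (hasDerivAt_const lam (0:ℝ)).congr_of_eventuallyEq hev

lemma curve1_hasDeriv (a b c k0 τ : ℝ) (hb : 0 < b) (hk0 : 0 < k0) (lam : ℝ) :
    HasDerivAt (fun l => τ + l * a + Heav (-l) * c * (l - Real.sin (k0 * b * l) / (k0 * b)))
      (a + c * Heav (-lam) * (1 - Real.cos (k0 * b * lam))) lam := by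
  set K := k0 * b with hKdef
  have hK : 0 < K := mul_pos hk0 hb
  have h1 : HasDerivAt (fun l : ℝ => τ + l * a) a lam := by
    simpa using ((hasDerivAt_id lam).mul_const a).const_add τ
  have h2 := (heav_term_hasDeriv K hK lam).const_mul c
  have h3 : (fun l => Heav (-l) * c * (l - Real.sin (K * l) / K)) =
      (fun l => c * (Heav (-l) * (l - Real.sin (K * l) / K))) := by
    funext l; ring
  have h4 : (fun l => τ + l * a + Heav (-l) * c * (l - Real.sin (K * l) / K)) =
      (fun l => (τ + l * a) + c * (Heav (-l) * (l - Real.sin (K * l) / K))) := by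
    funext l; ring
  rw [h4]
  have := h1.add h2
  exact this.congr_deriv (by ring)

lemma curve_hasDeriv (a b c k0 τ : ℝ) (hb : 0 < b) (hk0 : 0 < k0) (lam : ℝ) :
    HasDerivAt (curve a b c k0 τ) (jF a b c k0 (curve a b c k0 τ lam)) lam := by
  have h1 := curve1_hasDeriv a b c k0 τ hb hk0 lam
  have h2 : HasDerivAt (fun l : ℝ => l * b) b lam := by
    simpa using (hasDerivAt_id lam).mul_const b
  have h := h1.prodMk h2
  unfold curve jF
  convert h using 2
  rw [heav_neg_mul b lam hb]
  have : k0 * (lam * b) = k0 * b * lam := by ring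
  rw [this]

theorem stmt16 (a b c k0 τ : ℝ) (ha : 0 < a) (hb : 0 < b) (hc : 0 ≤ c) (hk0 : 0 < k0) :
    curve a b c k0 τ 0 = (τ, 0) ∧
    (∀ lam : ℝ, HasDerivAt (curve a b c k0 τ) (jF a b c k0 (curve a b c k0 τ lam)) lam) ∧
    (∀ δ : ℝ → ℝ × ℝ, δ 0 = (τ, 0) →
      (∀ lam : ℝ, HasDerivAt δ (jF a b c k0 (δ lam)) lam) → δ = curve a b c k0 τ) ∧
    Set.range (curve a b c k0 τ) =
      {p : ℝ × ℝ | p.1 - τ = (a/b) * p.2 + (c/(k0*b)) * Heav (-p.2) * (k0*p.2 - Real.sin (k0*p.2))} := by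
  have hb' : b ≠ 0 := ne_of_gt hb
  have hK : (0:ℝ) < k0 * b := mul_pos hk0 hb
  have hK' : k0 * b ≠ 0 := ne_of_gt hK
  refine ⟨by simp [curve, Heav], curve_hasDeriv a b c k0 τ hb hk0, ?_, ?_⟩
  · -- uniqueness
    intro δ h0 hder
    -- second component
    have hsnd : ∀ lam, HasDerivAt (fun l => (δ l).2) b lam := by
      intro lam
      have := ((hasFDerivAt_snd).comp lam (hder lam).hasFDerivAt).hasDerivAt
      simpa [jF, Function.comp_def] using this
    have hs2 : ∀ lam : ℝ, (δ lam).2 = lam * b := by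
      have hdiff : Differentiable ℝ (fun l => (δ l).2 - l * b) := fun x =>
        (((hsnd x).sub ((hasDerivAt_id x).mul_const b)).differentiableAt)
      have hzero : ∀ x, deriv (fun l => (δ l).2 - l * b) x = 0 := by
        intro x
        have : HasDerivAt (fun l => (δ l).2 - l * b) (b - b) x :=
          (hsnd x).sub (by simpa using (hasDerivAt_id x).mul_const b)
        simpa using this.deriv
      intro lam
      have := is_const_of_deriv_eq_zero hdiff hzero lam 0
      simp [h0] at this
      linarith
    -- first component
    have hfst : ∀ lam, HasDerivAt (fun l => (δ l).1)
        (a + c * Heav (-lam) * (1 - Real.cos (k0 * b * lam))) lam := by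
      intro lam
      have h' := ((hasFDerivAt_fst).comp lam (hder lam).hasFDerivAt).hasDerivAt
      have this2 : HasDerivAt (fun l => (δ l).1)
          (a + c * Heav (-(δ lam).2) * (1 - Real.cos (k0 * (δ lam).2))) lam := by
        simpa [jF, Function.comp_def] using h'
      rw [hs2 lam, heav_neg_mul b lam hb,
        show k0 * (lam * b) = k0 * b * lam from by ring] at this2
      exact this2
    have hs1 : ∀ lam : ℝ, (δ lam).1 = (curve a b c k0 τ lam).1 := by
      have hdiff : Differentiable ℝ (fun l => (δ l).1 - (curve a b c k0 τ l).1) := fun x =>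
        ((hfst x).sub (curve1_hasDeriv a b c k0 τ hb hk0 x)).differentiableAt
      have hzero : ∀ x, deriv (fun l => (δ l).1 - (curve a b c k0 τ l).1) x = 0 := by
        intro x
        have : HasDerivAt (fun l => (δ l).1 - (curve a b c k0 τ l).1)
            ((a + c * Heav (-x) * (1 - Real.cos (k0 * b * x))) -
             (a + c * Heav (-x) * (1 - Real.cos (k0 * b * x)))) x :=
          (hfst x).sub (curve1_hasDeriv a b c k0 τ hb hk0 x)
        simpa using this.deriv
      intro lam
      have := is_const_of_deriv_eq_zero hdiff hzero lam 0
      have h00 : (curve a b c k0 τ 0).1 = τ := by simp [curve, Heav]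
      rw [h0, h00] at this
      simp at this
      linarith
    funext lam
    ext
    · exact hs1 lam
    · rw [hs2 lam]; rfl
  · -- range
    ext p
    simp only [Set.mem_range, Set.mem_setOf_eq]
    constructor
    · rintro ⟨lam, rfl⟩
      simp only [curve]
      rw [heav_neg_mul b lam hb]
      have hsin : k0 * (lam * b) = k0 * b * lam := by ring
      rw [hsin]
      rcases le_or_gt lam 0 with h | h
      · have hH : Heav (-lam) = 1 := by simp [Heav, neg_nonneg, h]
        rw [hH]
        field_simp
        ring
      · have hH : Heav (-lam) = 0 := by simp [Heav, neg_nonneg, not_le.mpr h]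
        rw [hH]
        field_simp
        ring
    · intro hp
      refine ⟨p.2 / b, ?_⟩
      have h2 : p.2 / b * b = p.2 := div_mul_cancel₀ p.2 hb'
      have hH : Heav (-(p.2 / b)) = Heav (-p.2) := by
        unfold Heav
        congr 1
        simp only [neg_nonneg, eq_iff_iff]
        constructor
        · intro h
          nlinarith [h2]
        · intro h
          exact div_nonpos_of_nonpos_of_nonneg h hb.le
      have hsin : k0 * b * (p.2 / b) = k0 * p.2 := by
        field_simp
      have hp' : p.1 = τ + (a/b) * p.2 + (c/(k0*b)) * Heav (-p.2) * (k0*p.2 - Real.sin (k0*p.2)) := by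
        linarith
      rw [Prod.ext_iff]
      refine ⟨?_, h2⟩
      simp only [curve]
      rw [hH, hsin, hp']
      field_simp
end
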